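/- arXiv:1802.00647 — 2 statements merged into one kernel-verified Lean document; each statement's English description precedes it below -/
import Mathlib

section
/- Let τ be a finite plane tree with vertices u₀ ≺ u₁ ≺ ⋯ ≺ u_{|τ|−1} listed in lexicographic order, with {Łukasiewicz path W(τ), height function H(τ), and looptree distance H°ᵢ(τ) = d°_τ(root, uᵢ). If uᵢ is an ancestor of uⱼ (with i < j), then |H°ᵢ(τ) − H°ⱼ(τ)| ≤ (Wⱼ(τ) − Wᵢ(τ)) + (Hⱼ(τ) − Hᵢ(τ)). -/
open Finset

/-- A finite plane tree in Neveu's formalism: a finite set of words of positive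
integers (children are labelled `1, …, k`), containing the root `[]`, closed
under taking parents (`dropLast`) and under taking left-siblings. -/
structure PlaneTree where
  verts : Finset (List ℕ)
  root_mem : [] ∈ verts
  parent_mem : ∀ v ∈ verts, v.dropLast ∈ verts
  no_zero : ∀ v : List ℕ, v ++ [0] ∉ verts
  sib_closed : ∀ (v : List ℕ) (i j : ℕ), v ++ [j] ∈ verts → 1 ≤ i → i ≤ j → v ++ [i] ∈ verts

namespace PlaneTree

/-- The number of vertices of a plane tree. -/
def size (τ : PlaneTree) : ℕ := τ.verts.card

/-- The number of children `k_v(τ)` of a vertex `v`. -/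
def numChildren (τ : PlaneTree) (v : List ℕ) : ℕ :=
  (τ.verts.filter (fun w => w ≠ [] ∧ w.dropLast = v)).card

/-- The list of vertices of `τ` in lexicographical order. -/
noncomputable def vertexList (τ : PlaneTree) : List (List ℕ) :=
  τ.verts.sort (· ≤ ·)

/-- The `i`-th vertex of `τ` in lexicographical order. -/
noncomputable def vertex (τ : PlaneTree) (i : ℕ) : List ℕ :=
  (τ.vertexList).getD i []

/-- The height function: the height `|uᵢ|` of the `i`-th vertex in lexicographical order. -/
noncomputable def heightFn (τ : PlaneTree) (i : ℕ) : ℕ := (τ.vertex i).length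

/-- The Łukasiewicz path of `τ`: `W₀ = 0`, `W_{n+1} = Wₙ + k_{uₙ} - 1`. -/
noncomputable def luka (τ : PlaneTree) (n : ℕ) : ℤ :=
  (∑ i ∈ range n, (τ.numChildren (τ.vertex i) : ℤ)) - n

/-- The adjacency relation of the looptree `Loop(τ)`: `u ∼ v` iff `u, v` are consecutive
children of the same parent, or `v` is the first or the last child of `u` (or vice versa). -/
def loopAdj (τ : PlaneTree) (u v : List ℕ) : Prop :=
  u ∈ τ.verts ∧ v ∈ τ.verts ∧ u ≠ v ∧
    ((∃ p i, u = p ++ [i] ∧ v = p ++ [i + 1]) ∨ (∃ p i, v = p ++ [i] ∧ u = p ++ [i + 1]) ∨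
      v = u ++ [1] ∨ u = v ++ [1] ∨
      v = u ++ [τ.numChildren u] ∨ u = v ++ [τ.numChildren v])

/-- The looptree `Loop(τ)`, as a graph on the vertices of `τ`. -/
def loopGraph (τ : PlaneTree) : SimpleGraph (List ℕ) where
  Adj := τ.loopAdj
  symm := by
    constructor
    intro u v h
    obtain ⟨hu, hv, hne, h⟩ := h
    refine ⟨hv, hu, hne.symm, ?_⟩
    rcases h with h | h | h | h | h | h
    · exact Or.inr (Or.inl h)
    · exact Or.inl h
    · exact Or.inr (Or.inr (Or.inr (Or.inl h)))
    · exact Or.inr (Or.inr (Or.inl h))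
    · exact Or.inr (Or.inr (Or.inr (Or.inr (Or.inr h))))
    · exact Or.inr (Or.inr (Or.inr (Or.inr (Or.inl h))))
  loopless := by constructor; intro u h; exact h.2.2.1 rfl

/-- The looptree distance `H°ᵢ(τ) = d°_τ(∅, uᵢ)` from the root to the `i`-th vertex
in lexicographical order. -/
noncomputable def loopHeight (τ : PlaneTree) (i : ℕ) : ℕ :=
  (τ.loopGraph).dist [] (τ.vertex i)

/-- The number of leaves `Λ(τ)`. -/
def numLeaves (τ : PlaneTree) : ℕ :=
  (τ.verts.filter (fun v => τ.numChildren v = 0)).card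

end PlaneTree

/-! In lexicographical (depth-first) order, `Wₙ` is the size of the depth-first stack at `uₙ`,
the set of vertices after `uₙ` whose parent comes before `uₙ`: count the children of
`u₀, …, uₙ₋₁`. In the looptree one gets from `v` to its child `vc` by going to the last child
of `v` and walking left, in `k_v + 1 - c` steps, while the `k_v - c` younger siblings of `vc`
join the stack. Summing along the ancestral line from `uᵢ` to `uⱼ` bounds `d°(uᵢ, uⱼ)` by
`(Wⱼ - Wᵢ) + (Hⱼ - Hᵢ)`, and the triangle inequality finishes the proof. -/

namespace List

variable {α : Type*} [LinearOrder α]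

theorem lt_append_of_ne_nil (v : List α) {x : List α} (hx : x ≠ []) : v < v ++ x := by
  obtain ⟨a, t, rfl⟩ := exists_cons_of_ne_nil hx
  show Lex (· < ·) v (v ++ a :: t)
  induction v with
  | nil => exact .nil
  | cons b v ih => exact .cons ih

theorem le_append (v x : List α) : v ≤ v ++ x := by
  rcases eq_or_ne x [] with rfl | hx
  · rw [append_nil]
  · exact (lt_append_of_ne_nil v hx).le

theorem dropLast_lt {w : List α} (hw : w ≠ []) : w.dropLast < w := by
  conv_rhs => rw [← dropLast_append_getLast hw]
  exact lt_append_of_ne_nil _ (cons_ne_nil _ _)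

theorem append_singleton_lt_append_singleton (v : List α) {a b : α} (h : a < b) :
    v ++ [a] < v ++ [b] :=
  Lex.append_left _ (Lex.rel h) v

theorem append_lt_of_lt_of_not_prefix {v w : List α} (hlt : v < w) (hv : ¬ v <+: w)
    (x : List α) : v ++ x < w := by
  change Lex (· < ·) v w at hlt
  show Lex (· < ·) (v ++ x) w
  induction hlt with
  | nil => exact absurd nil_prefix hv
  | cons _ ih => exact .cons (ih fun h => hv (cons_prefix_cons.2 ⟨rfl, h⟩))
  | rel h => exact .rel h

end List

namespace PlaneTree

variable (τ : PlaneTree)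

theorem mem_of_append_mem {v s : List ℕ} (h : v ++ s ∈ τ.verts) : v ∈ τ.verts := by
  induction s using List.reverseRecOn with
  | nil => simpa using h
  | append_singleton s a ih =>
    exact ih (by simpa [← List.append_assoc] using τ.parent_mem _ h)

theorem append_singleton_mem_iff {v : List ℕ} {c : ℕ} :
    v ++ [c] ∈ τ.verts ↔ 1 ≤ c ∧ c ≤ τ.numChildren v := by
  have hinj : Function.Injective (fun d : ℕ => v ++ [d]) := fun a b h => by simpa using h
  have one_le {d : ℕ} (hd : v ++ [d] ∈ τ.verts) : 1 ≤ d :=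
    Nat.one_le_iff_ne_zero.2 fun h0 => τ.no_zero v (h0 ▸ hd)
  constructor
  · intro h
    refine ⟨one_le h, ?_⟩
    have hsub : (Finset.Icc 1 c).image (fun d => v ++ [d]) ⊆
        τ.verts.filter (fun w => w ≠ [] ∧ w.dropLast = v) := by
      intro w hw
      obtain ⟨d, hd, rfl⟩ := Finset.mem_image.1 hw
      rw [Finset.mem_Icc] at hd
      simpa using τ.sib_closed v d c h hd.1 hd.2
    simpa [numChildren, Finset.card_image_of_injective _ hinj] using Finset.card_le_card hsub
  · rintro ⟨hc, hck⟩
    by_contra hnot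
    -- otherwise every child has index `< c`, so there are fewer than `c` children
    have hsub : τ.verts.filter (fun w => w ≠ [] ∧ w.dropLast = v) ⊆
        (Finset.Ico 1 c).image (fun d => v ++ [d]) := by
      intro w hw
      obtain ⟨hmem, hne, rfl⟩ := Finset.mem_filter.1 hw
      rw [← List.dropLast_append_getLast hne] at hmem ⊢
      have hdc : w.getLast hne < c :=
        lt_of_not_ge fun hcd => hnot (τ.sib_closed _ c _ hmem hc hcd)
      rw [List.dropLast_concat]
      exact Finset.mem_image_of_mem _ (Finset.mem_Ico.2 ⟨one_le hmem, hdc⟩)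
    have := Finset.card_le_card hsub
    rw [Finset.card_image_of_injective _ hinj, Nat.card_Ico] at this
    exact absurd this (by unfold numChildren at hck; omega)

theorem vertex_eq_orderEmbOfFin {n : ℕ} (hn : n < τ.size) :
    τ.vertex n = τ.verts.orderEmbOfFin rfl ⟨n, hn⟩ := by
  rw [Finset.orderEmbOfFin_apply]
  exact List.getD_eq_getElem _ _ _

theorem vertex_mem {n : ℕ} (hn : n < τ.size) : τ.vertex n ∈ τ.verts := by
  rw [vertex_eq_orderEmbOfFin τ hn]
  exact Finset.orderEmbOfFin_mem _ _ _

theorem vertex_strictMonoOn : StrictMonoOn τ.vertex (Set.Iio τ.size) := fun m hm n hn hmn => by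
  rw [vertex_eq_orderEmbOfFin τ hm, vertex_eq_orderEmbOfFin τ hn]
  exact (τ.verts.orderEmbOfFin rfl).strictMono hmn

theorem exists_vertex_eq {w : List ℕ} (hw : w ∈ τ.verts) :
    ∃ m < τ.size, τ.vertex m = w := by
  obtain ⟨⟨m, hm⟩, rfl⟩ : w ∈ Set.range (τ.verts.orderEmbOfFin rfl) := by simpa using hw
  exact ⟨m, hm, vertex_eq_orderEmbOfFin τ hm⟩

theorem filter_lt_vertex {n : ℕ} (hn : n < τ.size) :
    τ.verts.filter (· < τ.vertex n) = (Finset.range n).image τ.vertex := by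
  ext w
  simp only [Finset.mem_filter, Finset.mem_image, Finset.mem_range]
  constructor
  · rintro ⟨hw, hlt⟩
    obtain ⟨m, hm, rfl⟩ := τ.exists_vertex_eq hw
    exact ⟨m, (τ.vertex_strictMonoOn.lt_iff_lt hm hn).1 hlt, rfl⟩
  · rintro ⟨m, hmn, rfl⟩
    exact ⟨τ.vertex_mem (hmn.trans hn), τ.vertex_strictMonoOn (hmn.trans hn) hn hmn⟩

theorem vertex_injOn_range {n : ℕ} (hn : n ≤ τ.size) : Set.InjOn τ.vertex (Finset.range n) :=
  τ.vertex_strictMonoOn.injOn.mono (by simpa using hn)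

theorem card_filter_lt_vertex {n : ℕ} (hn : n < τ.size) :
    (τ.verts.filter (· < τ.vertex n)).card = n := by
  rw [filter_lt_vertex τ hn, Finset.card_image_of_injOn (τ.vertex_injOn_range hn.le),
    Finset.card_range]

def dfsStack (u : List ℕ) : Finset (List ℕ) :=
  τ.verts.filter (fun w => u < w ∧ w.dropLast < u)

theorem sum_numChildren_eq_card (S : Finset (List ℕ)) :
    ∑ v ∈ S, τ.numChildren v =
      (τ.verts.filter (fun w => w ≠ [] ∧ w.dropLast ∈ S)).card := by
  rw [Finset.card_eq_sum_card_fiberwise (f := List.dropLast)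
    fun w hw => (Finset.mem_filter.1 hw).2.2]
  refine Finset.sum_congr rfl fun v hv => ?_
  rw [numChildren, Finset.filter_filter]
  exact congrArg _ <| Finset.filter_congr fun w _ =>
    ⟨fun ⟨hne, h⟩ => ⟨⟨hne, h ▸ hv⟩, h⟩,
      fun ⟨⟨hne, _⟩, h⟩ => ⟨hne, h⟩⟩

theorem card_filter_ne_nil_le_vertex {n : ℕ} (hn : n < τ.size) :
    (τ.verts.filter (fun w => w ≠ [] ∧ w ≤ τ.vertex n)).card = n := by
  have hu := τ.vertex_mem hn
  have hle : τ.verts.filter (· ≤ τ.vertex n) =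
      insert (τ.vertex n) (τ.verts.filter (· < τ.vertex n)) := by
    ext w
    simp only [Finset.mem_filter, Finset.mem_insert, le_iff_eq_or_lt]
    constructor
    · rintro ⟨hw, rfl | h⟩
      exacts [Or.inl rfl, Or.inr ⟨hw, h⟩]
    · rintro (rfl | ⟨hw, h⟩)
      exacts [⟨hu, Or.inl rfl⟩, ⟨hw, Or.inr h⟩]
  have hne : τ.verts.filter (fun w => w ≠ [] ∧ w ≤ τ.vertex n) =
      (τ.verts.filter (· ≤ τ.vertex n)).erase [] := by
    ext w
    simp only [Finset.mem_filter, Finset.mem_erase]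
    tauto
  rw [hne, Finset.card_erase_of_mem (s := τ.verts.filter (· ≤ τ.vertex n))
    (Finset.mem_filter.2 ⟨τ.root_mem, not_lt.1 (List.not_lt_nil _)⟩), hle,
    Finset.card_insert_of_notMem (s := τ.verts.filter (· < τ.vertex n))
      (fun h => lt_irrefl _ (Finset.mem_filter.1 h).2),
    τ.card_filter_lt_vertex hn, Nat.add_sub_cancel]

theorem luka_eq_card_dfsStack {n : ℕ} (hn : n < τ.size) :
    τ.luka n = (τ.dfsStack (τ.vertex n)).card := by
  set u := τ.vertex n
  have hsum : ∑ m ∈ Finset.range n, τ.numChildren (τ.vertex m) =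
      (τ.verts.filter (fun w => w ≠ [] ∧ w.dropLast < u)).card := by
    rw [← Finset.sum_image (τ.vertex_injOn_range hn.le),
      ← τ.filter_lt_vertex hn, sum_numChildren_eq_card]
    refine congrArg Finset.card (Finset.filter_congr fun w hw => ?_)
    simp [Finset.mem_filter, τ.parent_mem w hw, u]
  have hsplit : (τ.verts.filter (fun w => w ≠ [] ∧ w.dropLast < u)).card =
      (τ.verts.filter (fun w => w ≠ [] ∧ w ≤ u)).card + (τ.dfsStack u).card := by
    rw [← Finset.card_filter_add_card_filter_not (· ≤ u), Finset.filter_filter,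
      Finset.filter_filter, dfsStack]
    congr 2
    · ext w
      simp only [Finset.mem_filter]
      exact and_congr_right fun _ => ⟨fun ⟨⟨hne, _⟩, hle⟩ => ⟨hne, hle⟩,
        fun ⟨hne, hle⟩ => ⟨⟨hne, (List.dropLast_lt hne).trans_le hle⟩, hle⟩⟩
    · ext w
      simp only [Finset.mem_filter, not_le]
      exact and_congr_right fun _ => ⟨fun ⟨⟨_, h⟩, hlt⟩ => ⟨hlt, h⟩,
        fun ⟨hlt, h⟩ => ⟨⟨by rintro rfl; exact List.not_lt_nil _ hlt, h⟩, hlt⟩⟩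
  rw [luka, ← Nat.cast_sum, hsum, hsplit, τ.card_filter_ne_nil_le_vertex hn]
  push_cast
  ring

theorem card_dfsStack_add_le (v : List ℕ) (c : ℕ) :
    (τ.dfsStack v).card + (τ.numChildren v - c) ≤ (τ.dfsStack (v ++ [c])).card := by
  have hinj : Function.Injective (fun d : ℕ => v ++ [d]) := fun a b h => by simpa using h
  have hv : v < v ++ [c] := List.lt_append_of_ne_nil v (List.cons_ne_nil _ _)
  have hsub : τ.dfsStack v ∪ (Finset.Ioc c (τ.numChildren v)).image (fun d => v ++ [d]) ⊆
      τ.dfsStack (v ++ [c]) := by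
    intro w hw
    rcases Finset.mem_union.1 hw with hw | hw
    · obtain ⟨hw, hvw, hpw⟩ := Finset.mem_filter.1 hw
      have hpre : ¬ v <+: w := by
        rintro ⟨t, rfl⟩
        have ht : t ≠ [] := by rintro rfl; simp at hvw
        rw [List.dropLast_append_of_ne_nil ht] at hpw
        exact (List.le_append v _).not_gt hpw
      exact Finset.mem_filter.2
        ⟨hw, List.append_lt_of_lt_of_not_prefix hvw hpre [c], hpw.trans hv⟩
    · obtain ⟨d, hd, rfl⟩ := Finset.mem_image.1 hw
      rw [Finset.mem_Ioc] at hd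
      refine Finset.mem_filter.2 ⟨τ.append_singleton_mem_iff.2 ⟨by omega, hd.2⟩,
        List.append_singleton_lt_append_singleton v hd.1, ?_⟩
      rwa [List.dropLast_concat]
  have hdisj : Disjoint (τ.dfsStack v) ((Finset.Ioc c (τ.numChildren v)).image (v ++ [·])) := by
    refine Finset.disjoint_left.2 fun w hw hw' => ?_
    obtain ⟨d, -, rfl⟩ := Finset.mem_image.1 hw'
    have := (Finset.mem_filter.1 hw).2.2
    rw [List.dropLast_concat] at this
    exact lt_irrefl v this
  calc (τ.dfsStack v).card + (τ.numChildren v - c)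
      = (τ.dfsStack v ∪ (Finset.Ioc c (τ.numChildren v)).image (v ++ [·])).card := by
        rw [Finset.card_union_of_disjoint hdisj, Finset.card_image_of_injective _ hinj,
          Nat.card_Ioc]
    _ ≤ (τ.dfsStack (v ++ [c])).card := Finset.card_le_card hsub

theorem exists_walk_sibling {v : List ℕ} {c : ℕ} (hc : 1 ≤ c) {d : ℕ} (hcd : c ≤ d)
    (hd : v ++ [d] ∈ τ.verts) :
    ∃ p : τ.loopGraph.Walk (v ++ [d]) (v ++ [c]), p.length = d - c := by
  induction d, hcd using Nat.le_induction with
  | base => exact ⟨.nil, by simp⟩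
  | succ d hcd ih =>
    have hd' : v ++ [d] ∈ τ.verts := τ.sib_closed v d (d + 1) hd (hc.trans hcd) d.le_succ
    have hadj : τ.loopGraph.Adj (v ++ [d + 1]) (v ++ [d]) :=
      ⟨hd, hd', by simp, Or.inr (Or.inl ⟨v, d, rfl, rfl⟩)⟩
    obtain ⟨p, hp⟩ := ih hd'
    exact ⟨.cons hadj p, by simp [hp]; omega⟩

theorem exists_walk_child {v : List ℕ} {c : ℕ} (h : v ++ [c] ∈ τ.verts) :
    ∃ p : τ.loopGraph.Walk v (v ++ [c]), p.length = τ.numChildren v + 1 - c := by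
  obtain ⟨hc, hck⟩ := τ.append_singleton_mem_iff.1 h
  have hlast : v ++ [τ.numChildren v] ∈ τ.verts :=
    τ.append_singleton_mem_iff.2 ⟨hc.trans hck, le_rfl⟩
  have hadj : τ.loopGraph.Adj v (v ++ [τ.numChildren v]) :=
    ⟨τ.mem_of_append_mem h, hlast, by simp, Or.inr (Or.inr (Or.inr (Or.inr (Or.inl rfl))))⟩
  obtain ⟨p, hp⟩ := τ.exists_walk_sibling hc hck hlast
  exact ⟨.cons hadj p, by simp [hp]; omega⟩

theorem exists_walk_append {v s : List ℕ} (h : v ++ s ∈ τ.verts) :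
    ∃ p : τ.loopGraph.Walk v (v ++ s),
      p.length + (τ.dfsStack v).card ≤ (τ.dfsStack (v ++ s)).card + s.length := by
  induction s generalizing v with
  | nil => exact ⟨SimpleGraph.Walk.nil.copy rfl (List.append_nil v).symm, by simp⟩
  | cons c s ih =>
    rw [← List.singleton_append, ← List.append_assoc] at h ⊢
    have hc := τ.mem_of_append_mem h
    obtain ⟨p, hp⟩ := τ.exists_walk_child hc
    obtain ⟨q, hq⟩ := ih h
    have hck := (τ.append_singleton_mem_iff.1 hc).2
    have := τ.card_dfsStack_add_le v c
    refine ⟨p.append q, ?_⟩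
    simp only [SimpleGraph.Walk.length_append, List.length_append, List.length_singleton]
    omega

end PlaneTree

open PlaneTree in
/-- If `uᵢ` is an ancestor of `uⱼ` in `τ` (with `i < j`), then
`|H°ᵢ(τ) − H°ⱼ(τ)| ≤ (Wⱼ(τ) − Wᵢ(τ)) + (Hⱼ(τ) − Hᵢ(τ))`. -/
theorem stmt_3 (τ : PlaneTree) (i j : ℕ) (hij : i < j) (hj : j < τ.size)
    (hanc : τ.vertex i <+: τ.vertex j) :
    |(τ.loopHeight i : ℤ) - (τ.loopHeight j : ℤ)| ≤
      (τ.luka j - τ.luka i) + ((τ.heightFn j : ℤ) - (τ.heightFn i : ℤ)) := by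
  have hi : i < τ.size := hij.trans hj
  obtain ⟨s, hs⟩ := hanc
  obtain ⟨p, hp⟩ := τ.exists_walk_append (v := τ.vertex i) (s := s) (hs ▸ τ.vertex_mem hj)
  have hreach : τ.loopGraph.Reachable (τ.vertex i) (τ.vertex j) := hs ▸ p.reachable
  have hdist : τ.loopGraph.dist (τ.vertex i) (τ.vertex j) ≤ p.length :=
    hs ▸ SimpleGraph.dist_le p
  have hj_le := hreach.dist_triangle_right []
  have hi_le := hreach.symm.dist_triangle_right []
  rw [SimpleGraph.dist_comm (u := τ.vertex j)] at hi_le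
  have hheight : τ.heightFn j = τ.heightFn i + s.length := by
    simp [heightFn, ← hs]
  rw [τ.luka_eq_card_dfsStack hi, τ.luka_eq_card_dfsStack hj, ← hs, hheight, abs_sub_le_iff]
  unfold loopHeight
  omega
end

section
/- Let μ be a probability measure on ℤ≥0 with mean 1 and P(X ≥ k) = L(k)/k² with L slowly varying (domain of attraction of a Gaussian law, infinite variance case), and let (L₁,R₁) be as above with law P((L,R)=(i,j)) = μ(i+j+1). Then P(R₁ ≥ k) ∼ L(k)/k and P(min(L₁,R₁) ≥ k) ∼ L(k)/(2k) as k → ∞. -/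
open Filter Topology

/-- A function `L : ℝ → ℝ` is slowly varying at infinity. -/
def SlowlyVarying (L : ℝ → ℝ) : Prop :=
  ∀ l : ℝ, 0 < l → Tendsto (fun x => L (l * x) / L x) atTop (nhds 1)

/-- The tail `μ([j, ∞)) = Σ_{m ≥ j} μ(m)`. -/
noncomputable def tailSum (μ : ℕ → ℝ) (j : ℕ) : ℝ := ∑' i : ℕ, μ (j + i)

/-!
Write `f k = μ([k,∞)) = L(k)/k²`. Then `f` is nonincreasing and `f(qc)/f(c) → q⁻²` for every
integer `q ≥ 1`; in particular `f(2m) ≤ f(m)/3` eventually, which makes `f` summable with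
`Σ_{j ≥ m} f(j) ≤ 3 m f(m)`. For fixed `n` and `k ≈ nc`, cut `Σ_{j > k} f(j)` into the blocks
`[qc, (q+1)c)`, `n ≤ q < n²`, plus the rest beyond `n²c`. By monotonicity a block lies between
`c f((q+1)c)` and `c f(qc)`, i.e. it is `≈ c f(c)/q²`, while the rest is `O(c f(c)/n²)`. Hence, as
`k → ∞`, `Σ_{j > k} f(j) / (k f(k))` is eventually squeezed between `n`-times Riemann sums of
`∫ x⁻² dx` over `[n, n²]`, which tend to `1` as `n → ∞`.

For the second sum, `2μ([2m+1,∞)) − μ(2m+1) = f(2m+1) + f(2m+2)`, so it equals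
`Σ_{j > 2k} f(j) ∼ 2k f(2k) ∼ k f(k)/2`.
-/

open Finset

section TailSum

variable {μ : ℕ → ℝ}

lemma summable_nat_add_left (hμ : Summable μ) (a : ℕ) : Summable fun i => μ (a + i) := by
  simpa only [add_comm] using (summable_nat_add_iff a).2 hμ

lemma summable_of_tailSum_ne_zero {a : ℕ} (ha : tailSum μ a ≠ 0) : Summable μ := by
  by_contra hμ
  refine ha (tsum_eq_zero_of_not_summable fun h => hμ ((summable_nat_add_iff a).1 ?_))
  simpa only [add_comm] using h

lemma tailSum_nonneg (hμ : ∀ k, 0 ≤ μ k) (a : ℕ) : 0 ≤ tailSum μ a :=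
  tsum_nonneg fun _ => hμ _

lemma tailSum_eq_sum_Ico_add (hμ : Summable μ) {a b : ℕ} (hab : a ≤ b) :
    tailSum μ a = ∑ j ∈ Ico a b, μ j + tailSum μ b := by
  rw [tailSum, ← (summable_nat_add_left hμ a).sum_add_tsum_nat_add (b - a),
    Finset.sum_Ico_eq_sum_range, tailSum]
  congr 2 with i
  congr 1
  omega

lemma tailSum_eq_add_tailSum_succ (hμ : Summable μ) (a : ℕ) :
    tailSum μ a = μ a + tailSum μ (a + 1) := by
  simpa using tailSum_eq_sum_Ico_add hμ (Nat.le_succ a)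

lemma tailSum_anti (hμ : Summable μ) (h0 : ∀ k, 0 ≤ μ k) : Antitone (tailSum μ) :=
  fun a b hab => by
    rw [tailSum_eq_sum_Ico_add hμ hab]
    exact le_add_of_nonneg_left (sum_nonneg fun j _ => h0 j)

lemma sum_Ico_le_tailSum (hμ : Summable μ) (h0 : ∀ k, 0 ≤ μ k) {a b : ℕ} (hab : a ≤ b) :
    ∑ j ∈ Ico a b, μ j ≤ tailSum μ a := by
  rw [tailSum_eq_sum_Ico_add hμ hab]
  exact le_add_of_nonneg_right (tailSum_nonneg h0 b)

end TailSum

section Blocks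

variable {f : ℕ → ℝ}

lemma sum_Ico_add_le (hf : Antitone f) (a c : ℕ) : ∑ j ∈ Ico a (a + c), f j ≤ c * f a := by
  simpa using sum_le_card_nsmul (Ico a (a + c)) f (f a) fun j hj => hf (mem_Ico.1 hj).1

lemma le_sum_Ico_add (hf : Antitone f) (a c : ℕ) : c * f (a + c) ≤ ∑ j ∈ Ico a (a + c), f j := by
  simpa using card_nsmul_le_sum (Ico a (a + c)) f (f (a + c)) fun j hj =>
    hf (mem_Ico.1 hj).2.le

lemma sum_Ico_mul_eq_sum_blocks (f : ℕ → ℝ) (c : ℕ) {n N : ℕ} (hnN : n ≤ N) :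
    ∑ j ∈ Ico (n * c) (N * c), f j = ∑ q ∈ Ico n N, ∑ j ∈ Ico (q * c) (q * c + c), f j := by
  induction N, hnN using Nat.le_induction with
  | base => simp
  | succ N hnN ih =>
    rw [sum_Ico_succ_top hnN, ← ih, add_mul, one_mul]
    exact (sum_Ico_consecutive _ (Nat.mul_le_mul_right c hnN) (Nat.le_add_right _ _)).symm

lemma sum_Ico_mul_le (hf : Antitone f) (c : ℕ) {n N : ℕ} (hnN : n ≤ N) :
    ∑ j ∈ Ico (n * c) (N * c), f j ≤ c * ∑ q ∈ Ico n N, f (q * c) := by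
  rw [sum_Ico_mul_eq_sum_blocks f c hnN, mul_sum]
  exact sum_le_sum fun q _ => sum_Ico_add_le hf _ _

lemma le_sum_Ico_mul (hf : Antitone f) (c : ℕ) {n N : ℕ} (hnN : n ≤ N) :
    c * ∑ q ∈ Ico n N, f ((q + 1) * c) ≤ ∑ j ∈ Ico (n * c) (N * c), f j := by
  rw [sum_Ico_mul_eq_sum_blocks f c hnN, mul_sum]
  exact sum_le_sum fun q _ => by simpa only [add_mul, one_mul] using le_sum_Ico_add hf (q * c) c

end Blocks

section Doubling

variable {f : ℕ → ℝ} {r : ℝ} {M : ℕ}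

lemma le_pow_mul_of_doubling (hM : ∀ m, M ≤ m → f (2 * m) ≤ r * f m) (hr : 0 ≤ r) {k : ℕ}
    (hk : M ≤ k) (i : ℕ) : f (2 ^ i * k) ≤ r ^ i * f k := by
  induction i with
  | zero => simp
  | succ i ih =>
    calc f (2 ^ (i + 1) * k) = f (2 * (2 ^ i * k)) := by ring_nf
      _ ≤ r * f (2 ^ i * k) := hM _ (hk.trans (Nat.le_mul_of_pos_left k (by positivity)))
      _ ≤ r * (r ^ i * f k) := mul_le_mul_of_nonneg_left ih hr
      _ = r ^ (i + 1) * f k := by ring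

lemma sum_Ico_pow_two_mul_le (hf : Antitone f) (hM : ∀ m, M ≤ m → f (2 * m) ≤ r * f m)
    (hr : 0 ≤ r) {k : ℕ} (hk : M ≤ k) (I : ℕ) :
    ∑ j ∈ Ico k (2 ^ I * k), f j ≤ (∑ i ∈ range I, (2 * r) ^ i) * (k * f k) := by
  induction I with
  | zero => simp
  | succ I ih =>
    have hsplit : 2 ^ (I + 1) * k = 2 ^ I * k + 2 ^ I * k := by ring
    have hblock : ∑ j ∈ Ico (2 ^ I * k) (2 ^ I * k + 2 ^ I * k), f j ≤ (2 * r) ^ I * (k * f k) :=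
      calc _ ≤ ((2 ^ I * k : ℕ) : ℝ) * f (2 ^ I * k) := sum_Ico_add_le hf _ _
        _ ≤ ((2 ^ I * k : ℕ) : ℝ) * (r ^ I * f k) :=
          mul_le_mul_of_nonneg_left (le_pow_mul_of_doubling hM hr hk I) (by positivity)
        _ = (2 * r) ^ I * (k * f k) := by push_cast; ring
    rw [hsplit, ← sum_Ico_consecutive _ (Nat.le_mul_of_pos_left k (by positivity))
      (Nat.le_add_right _ _), sum_range_succ, add_mul]
    exact add_le_add ih hblock

lemma sum_Ico_le_of_doubling (h0 : ∀ j, 0 ≤ f j) (hf : Antitone f)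
    (hM : ∀ m, M ≤ m → f (2 * m) ≤ r * f m) (hr : 0 ≤ r) (hr2 : 2 * r < 1) {k : ℕ}
    (hk : M ≤ k) (hk0 : 0 < k) (m : ℕ) : ∑ j ∈ Ico k m, f j ≤ k * f k / (1 - 2 * r) := by
  have hm : m ≤ 2 ^ m * k := (Nat.lt_two_pow_self).le.trans (Nat.le_mul_of_pos_right _ hk0)
  have hgeom : ∑ i ∈ range m, (2 * r) ^ i ≤ 1 / (1 - 2 * r) := by
    have h := geom_sum_Ico_le_of_lt_one (x := 2 * r) (m := 0) (n := m) (by positivity) hr2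
    rwa [← range_eq_Ico, pow_zero] at h
  calc ∑ j ∈ Ico k m, f j ≤ ∑ j ∈ Ico k (2 ^ m * k), f j :=
        sum_le_sum_of_subset_of_nonneg (Ico_subset_Ico_right hm) fun j _ _ => h0 j
    _ ≤ (∑ i ∈ range m, (2 * r) ^ i) * (k * f k) := sum_Ico_pow_two_mul_le hf hM hr hk m
    _ ≤ 1 / (1 - 2 * r) * (k * f k) :=
        mul_le_mul_of_nonneg_right hgeom (mul_nonneg k.cast_nonneg (h0 k))
    _ = k * f k / (1 - 2 * r) := by ring

lemma summable_of_doubling (h0 : ∀ j, 0 ≤ f j) (hf : Antitone f)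
    (hM : ∀ m, M ≤ m → f (2 * m) ≤ r * f m) (hr : 0 ≤ r) (hr2 : 2 * r < 1) : Summable f := by
  refine summable_of_sum_range_le
    (c := ∑ j ∈ range (M + 1), f j + (M + 1 : ℕ) * f (M + 1) / (1 - 2 * r)) h0 fun m => ?_
  calc ∑ j ∈ range m, f j ≤ ∑ j ∈ range (M + 1 + m), f j :=
        sum_le_sum_of_subset_of_nonneg (range_subset_range.2 (by omega)) fun j _ _ => h0 j
    _ = ∑ j ∈ range (M + 1), f j + ∑ j ∈ Ico (M + 1) (M + 1 + m), f j :=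
        (sum_range_add_sum_Ico _ (by omega)).symm
    _ ≤ ∑ j ∈ range (M + 1), f j + (M + 1 : ℕ) * f (M + 1) / (1 - 2 * r) :=
        add_le_add_right
          (sum_Ico_le_of_doubling h0 hf hM hr hr2 (k := M + 1) (by omega) (by omega) _) _

lemma tailSum_le_of_doubling (h0 : ∀ j, 0 ≤ f j) (hf : Antitone f)
    (hM : ∀ m, M ≤ m → f (2 * m) ≤ r * f m) (hr : 0 ≤ r) (hr2 : 2 * r < 1) {k : ℕ}
    (hk : M ≤ k) (hk0 : 0 < k) : tailSum f k ≤ k * f k / (1 - 2 * r) := by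
  refine Real.tsum_le_of_sum_range_le (fun _ => h0 _) fun m => ?_
  simpa [sum_Ico_eq_sum_range] using sum_Ico_le_of_doubling h0 hf hM hr hr2 hk hk0 (k + m)

end Doubling

section RiemannSums

/-- `riemannUpper n N` and `riemannLower n N` are the limits, as `c → ∞`, of the upper and lower
bounds for `Σ_{j > k} f(j) / (k f(k))` obtained from the blocks `[qc, (q+1)c)`, `n ≤ q < N`,
when `nc ≤ k < (n+1)c`. -/
noncomputable def riemannUpper (n N : ℕ) : ℝ :=
  (∑ q ∈ Ico n N, ((q : ℝ) ^ 2)⁻¹ + 3 * N * ((N : ℝ) ^ 2)⁻¹) / (n * (((n + 1 : ℕ) : ℝ) ^ 2)⁻¹)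

noncomputable def riemannLower (n N : ℕ) : ℝ :=
  (∑ q ∈ Ico (n + 1) N, (((q + 1 : ℕ) : ℝ) ^ 2)⁻¹) / ((n + 1 : ℕ) * ((n : ℝ) ^ 2)⁻¹)

lemma sum_Ico_le_of_le_sub {h g : ℕ → ℝ} {n N : ℕ} (hnN : n ≤ N)
    (hle : ∀ q ∈ Ico n N, h q ≤ g q - g (q + 1)) : ∑ q ∈ Ico n N, h q ≤ g n - g N := by
  have htel := sum_Ico_sub (fun i => -g i) hnN
  simp only [neg_sub_neg] at htel
  exact (sum_le_sum hle).trans_eq htel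

lemma sub_le_sum_Ico_of_sub_le {h g : ℕ → ℝ} {n N : ℕ} (hnN : n ≤ N)
    (hle : ∀ q ∈ Ico n N, g q - g (q + 1) ≤ h q) : g n - g N ≤ ∑ q ∈ Ico n N, h q := by
  have htel := sum_Ico_sub (fun i => -g i) hnN
  simp only [neg_sub_neg] at htel
  exact htel.symm.trans_le (sum_le_sum hle)

lemma riemannUpper_sq_le {n : ℕ} (hn : 2 ≤ n) :
    riemannUpper n (n ^ 2) ≤ ((1 - (n : ℝ)⁻¹)⁻¹ + 3 * (n : ℝ)⁻¹) * (1 + (n : ℝ)⁻¹) ^ 2 := by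
  have hn' : (2 : ℝ) ≤ n := by exact_mod_cast hn
  have hsum : ∑ q ∈ Ico n (n ^ 2), ((q : ℝ) ^ 2)⁻¹ ≤ ((n : ℝ) - 1)⁻¹ := by
    refine (sum_Ico_le_of_le_sub (g := fun q => ((q : ℝ) - 1)⁻¹) (by nlinarith)
      fun q hq => ?_).trans (sub_le_self _ ?_)
    · have hq' : (2 : ℝ) ≤ q := by exact_mod_cast hn.trans (mem_Ico.1 hq).1
      push_cast
      rw [add_sub_cancel_right, inv_sub_inv (by linarith) (by linarith), ← one_div,
        div_le_div_iff₀ (by positivity) (by nlinarith)]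
      nlinarith
    · have : (1 : ℝ) ≤ (n ^ 2 : ℕ) := by exact_mod_cast Nat.one_le_pow _ _ (by omega)
      exact inv_nonneg.2 (by linarith)
  unfold riemannUpper
  rw [div_le_iff₀ (by positivity)]
  calc ∑ q ∈ Ico n (n ^ 2), ((q : ℝ) ^ 2)⁻¹ + 3 * (n ^ 2 : ℕ) * (((n ^ 2 : ℕ) : ℝ) ^ 2)⁻¹
      ≤ ((n : ℝ) - 1)⁻¹ + 3 * (n ^ 2 : ℕ) * (((n ^ 2 : ℕ) : ℝ) ^ 2)⁻¹ := by linarith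
    _ = _ := by
      have : (n : ℝ) - 1 ≠ 0 := by linarith
      have : 1 - (n : ℝ)⁻¹ ≠ 0 := by
        rw [sub_ne_zero]; exact (inv_lt_one_of_one_lt₀ (by linarith)).ne'
      push_cast
      field_simp

lemma le_riemannLower_sq {n : ℕ} (hn : 2 ≤ n) :
    ((1 + 2 * (n : ℝ)⁻¹)⁻¹ - (n : ℝ)⁻¹ * (1 + (n : ℝ)⁻¹ ^ 2)⁻¹) * (1 + (n : ℝ)⁻¹)⁻¹ ≤
      riemannLower n (n ^ 2) := by
  have hn' : (2 : ℝ) ≤ n := by exact_mod_cast hn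
  have hsum : ((n : ℝ) + 2)⁻¹ - ((n : ℝ) ^ 2 + 1)⁻¹ ≤
      ∑ q ∈ Ico (n + 1) (n ^ 2), (((q + 1 : ℕ) : ℝ) ^ 2)⁻¹ := by
    refine le_of_eq_of_le ?_ (sub_le_sum_Ico_of_sub_le (g := fun q => ((q : ℝ) + 1)⁻¹)
      (by nlinarith) fun q _ => ?_)
    · push_cast; ring_nf
    · push_cast
      rw [inv_sub_inv (by positivity) (by positivity), ← one_div,
        div_le_div_iff₀ (by positivity) (by positivity)]
      nlinarith
  unfold riemannLower
  rw [le_div_iff₀ (by positivity)]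
  calc _ = (((n : ℝ) + 2)⁻¹ - ((n : ℝ) ^ 2 + 1)⁻¹) := by
        push_cast
        field_simp
    _ ≤ _ := hsum

lemma eventually_riemannUpper_lt {b : ℝ} (hb : 1 < b) :
    ∀ᶠ n : ℕ in atTop, riemannUpper n (n ^ 2) < b := by
  have hx := tendsto_inv_atTop_zero.comp (tendsto_natCast_atTop_atTop (R := ℝ))
  have hg : ContinuousAt (fun x : ℝ => ((1 - x)⁻¹ + 3 * x) * (1 + x) ^ 2) 0 := by
    fun_prop (disch := norm_num)
  have hlim : Tendsto (fun n : ℕ => ((1 - (n : ℝ)⁻¹)⁻¹ + 3 * (n : ℝ)⁻¹) * (1 + (n : ℝ)⁻¹) ^ 2)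
      atTop (𝓝 1) := by
    simpa [Function.comp_def] using hg.tendsto.comp hx
  filter_upwards [hlim.eventually (gt_mem_nhds hb), eventually_ge_atTop 2] with n hn hn2
  exact (riemannUpper_sq_le hn2).trans_lt hn

lemma eventually_lt_riemannLower {b : ℝ} (hb : b < 1) :
    ∀ᶠ n : ℕ in atTop, b < riemannLower n (n ^ 2) := by
  have hx := tendsto_inv_atTop_zero.comp (tendsto_natCast_atTop_atTop (R := ℝ))
  have hg : ContinuousAt (fun x : ℝ => ((1 + 2 * x)⁻¹ - x * (1 + x ^ 2)⁻¹) * (1 + x)⁻¹) 0 := by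
    fun_prop (disch := norm_num)
  have hlim : Tendsto (fun n : ℕ => ((1 + 2 * (n : ℝ)⁻¹)⁻¹ - (n : ℝ)⁻¹ * (1 + (n : ℝ)⁻¹ ^ 2)⁻¹) *
      (1 + (n : ℝ)⁻¹)⁻¹) atTop (𝓝 1) := by
    simpa [Function.comp_def] using hg.tendsto.comp hx
  filter_upwards [hlim.eventually (lt_mem_nhds hb), eventually_ge_atTop 2] with n hn hn2
  exact hn.trans_le (le_riemannLower_sq hn2)

end RiemannSums

lemma Filter.Tendsto.div_of_div {α : Type*} {l : Filter α} {g A B : α → ℝ} {a b : ℝ}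
    (hg : ∀ᶠ x in l, g x ≠ 0) (hA : Tendsto (fun x => A x / g x) l (𝓝 a))
    (hB : Tendsto (fun x => B x / g x) l (𝓝 b)) (hb : b ≠ 0) :
    Tendsto (fun x => A x / B x) l (𝓝 (a / b)) :=
  (hA.div hB hb).congr' (hg.mono fun _ hx => div_div_div_cancel_right₀ hx _ _)

lemma Nat.succ_le_succ_mul_div {n k : ℕ} (hn : 0 < n) (h : n ≤ k / n) :
    k + 1 ≤ (n + 1) * (k / n) := by
  have := Nat.div_add_mod k n
  have := Nat.mod_lt k hn
  rw [add_mul]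
  omega

section Karamata

variable {f : ℕ → ℝ}

lemma eventually_doubling (hpos : ∀ k, 0 < f k)
    (hf : ∀ q : ℕ, 0 < q → Tendsto (fun c => f (q * c) / f c) atTop (𝓝 ((q : ℝ) ^ 2)⁻¹)) :
    ∀ᶠ m in atTop, f (2 * m) ≤ 1 / 3 * f m := by
  have hquarter : ((2 : ℕ) ^ 2 : ℝ)⁻¹ < 1 / 3 := by norm_num
  filter_upwards [(hf 2 two_pos).eventually (gt_mem_nhds hquarter)] with m hm
  exact ((div_lt_iff₀ (hpos m)).1 hm).le

lemma summable_of_tendsto_div (hpos : ∀ k, 0 < f k) (hanti : Antitone f)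
    (hf : ∀ q : ℕ, 0 < q → Tendsto (fun c => f (q * c) / f c) atTop (𝓝 ((q : ℝ) ^ 2)⁻¹)) :
    Summable f := by
  obtain ⟨M, hM⟩ := eventually_atTop.1 (eventually_doubling hpos hf)
  exact summable_of_doubling (fun j => (hpos j).le) hanti hM (by norm_num) (by norm_num)

variable {M : ℕ}

lemma tailSum_le_three_mul (hpos : ∀ k, 0 < f k) (hanti : Antitone f)
    (hM : ∀ m, M ≤ m → f (2 * m) ≤ 1 / 3 * f m) {k : ℕ} (hk : M ≤ k) (hk0 : 0 < k) :
    tailSum f k ≤ 3 * (k * f k) := by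
  calc tailSum f k ≤ k * f k / (1 - 2 * (1 / 3)) :=
        tailSum_le_of_doubling (fun j => (hpos j).le) hanti hM (by norm_num) (by norm_num) hk hk0
    _ = 3 * (k * f k) := by ring

lemma tailSum_succ_div_le (hpos : ∀ k, 0 < f k) (hanti : Antitone f)
    (hM : ∀ m, M ≤ m → f (2 * m) ≤ 1 / 3 * f m) {n N c k : ℕ} (hn : 0 < n) (hnN : n ≤ N)
    (hMc : M ≤ c) (hc : 0 < c) (hk : n * c ≤ k) (hk' : k ≤ (n + 1) * c) :
    tailSum f (k + 1) / (k * f k) ≤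
      (∑ q ∈ Ico n N, f (q * c) + 3 * N * f (N * c)) / (n * f ((n + 1) * c)) := by
  have h0 : ∀ j, 0 ≤ f j := fun j => (hpos j).le
  have hsum : Summable f := summable_of_doubling h0 hanti hM (by norm_num) (by norm_num)
  have hT : tailSum f (k + 1) ≤ c * (∑ q ∈ Ico n N, f (q * c) + 3 * N * f (N * c)) :=
    calc tailSum f (k + 1) ≤ tailSum f (n * c) := tailSum_anti hsum h0 (by omega)
      _ = ∑ j ∈ Ico (n * c) (N * c), f j + tailSum f (N * c) :=
        tailSum_eq_sum_Ico_add hsum (Nat.mul_le_mul_right c hnN)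
      _ ≤ c * ∑ q ∈ Ico n N, f (q * c) + 3 * ((N * c : ℕ) * f (N * c)) :=
        add_le_add (sum_Ico_mul_le hanti c hnN) (tailSum_le_three_mul hpos hanti hM
          (hMc.trans (Nat.le_mul_of_pos_left c (by omega))) (Nat.mul_pos (by omega) hc))
      _ = c * (∑ q ∈ Ico n N, f (q * c) + 3 * N * f (N * c)) := by push_cast; ring
  have hkf : (n * c : ℕ) * f ((n + 1) * c) ≤ k * f k :=
    mul_le_mul (by exact_mod_cast hk) (hanti hk') (h0 _) k.cast_nonneg
  calc tailSum f (k + 1) / (k * f k)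
      ≤ c * (∑ q ∈ Ico n N, f (q * c) + 3 * N * f (N * c)) / ((n * c : ℕ) * f ((n + 1) * c)) :=
        div_le_div₀ ((tailSum_nonneg h0 _).trans hT) hT (mul_pos (by positivity) (hpos _)) hkf
    _ = (∑ q ∈ Ico n N, f (q * c) + 3 * N * f (N * c)) / (n * f ((n + 1) * c)) := by
        push_cast
        rw [mul_comm (n : ℝ) c, mul_assoc (c : ℝ), mul_div_mul_left _ _ (by positivity)]

lemma div_le_tailSum_succ_div (hpos : ∀ k, 0 < f k) (hanti : Antitone f) (hsum : Summable f)
    {n N c k : ℕ} (hnN : n + 1 ≤ N) (hc : 0 < c) (hn : 0 < n) (hk : n * c ≤ k)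
    (hk' : k + 1 ≤ (n + 1) * c) :
    (∑ q ∈ Ico (n + 1) N, f ((q + 1) * c)) / ((n + 1 : ℕ) * f (n * c)) ≤
      tailSum f (k + 1) / (k * f k) := by
  have h0 : ∀ j, 0 ≤ f j := fun j => (hpos j).le
  have hT : c * ∑ q ∈ Ico (n + 1) N, f ((q + 1) * c) ≤ tailSum f (k + 1) :=
    calc c * ∑ q ∈ Ico (n + 1) N, f ((q + 1) * c)
        ≤ ∑ j ∈ Ico ((n + 1) * c) (N * c), f j := le_sum_Ico_mul hanti c hnN
      _ ≤ tailSum f ((n + 1) * c) := sum_Ico_le_tailSum hsum h0 (Nat.mul_le_mul_right c hnN)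
      _ ≤ tailSum f (k + 1) := tailSum_anti hsum h0 hk'
  have hkf : k * f k ≤ ((n + 1) * c : ℕ) * f (n * c) :=
    mul_le_mul (by exact_mod_cast (by omega : k ≤ (n + 1) * c)) (hanti hk) (h0 _) (by positivity)
  calc (∑ q ∈ Ico (n + 1) N, f ((q + 1) * c)) / ((n + 1 : ℕ) * f (n * c))
      = (c * ∑ q ∈ Ico (n + 1) N, f ((q + 1) * c)) / (((n + 1) * c : ℕ) * f (n * c)) := by
        push_cast
        rw [mul_comm ((n : ℝ) + 1) c, mul_assoc (c : ℝ), mul_div_mul_left _ _ (by positivity)]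
    _ ≤ tailSum f (k + 1) / (k * f k) :=
        div_le_div₀ (tailSum_nonneg h0 _) hT
          (mul_pos (by exact_mod_cast (by positivity : 0 < n * c).trans_le hk) (hpos k)) hkf

lemma eventually_tailSum_succ_div_lt (hpos : ∀ k, 0 < f k) (hanti : Antitone f)
    (hf : ∀ q : ℕ, 0 < q → Tendsto (fun c => f (q * c) / f c) atTop (𝓝 ((q : ℝ) ^ 2)⁻¹))
    {n N : ℕ} (hn : 0 < n) (hnN : n ≤ N) {b : ℝ} (hb : riemannUpper n N < b) :
    ∀ᶠ k in atTop, tailSum f (k + 1) / (k * f k) < b := by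
  obtain ⟨M, hM⟩ := eventually_atTop.1 (eventually_doubling hpos hf)
  have hU : Tendsto (fun c => (∑ q ∈ Ico n N, f (q * c) + 3 * N * f (N * c)) /
      (n * f ((n + 1) * c))) atTop (𝓝 (riemannUpper n N)) := by
    refine Tendsto.div_of_div (g := f) (Eventually.of_forall fun c => (hpos c).ne') ?_ ?_
      (by positivity)
    · simp only [add_div, sum_div, mul_div_assoc]
      exact (tendsto_finsetSum _ fun q hq => hf q (by linarith [(mem_Ico.1 hq).1])).add
        ((hf N (by omega)).const_mul _)
    · simp only [mul_div_assoc]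
      exact (hf (n + 1) n.succ_pos).const_mul _
  filter_upwards [(Nat.tendsto_div_const_atTop hn.ne').eventually
    ((hU.eventually (gt_mem_nhds hb)).and (eventually_ge_atTop (max n M)))] with k ⟨hUk, hk⟩
  refine (tailSum_succ_div_le hpos hanti hM hn hnN (le_of_max_le_right hk) (by omega)
    (Nat.mul_div_le k n) ?_).trans_lt hUk
  linarith [Nat.succ_le_succ_mul_div hn (le_of_max_le_left hk)]

lemma eventually_lt_tailSum_succ_div (hpos : ∀ k, 0 < f k) (hanti : Antitone f)
    (hf : ∀ q : ℕ, 0 < q → Tendsto (fun c => f (q * c) / f c) atTop (𝓝 ((q : ℝ) ^ 2)⁻¹))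
    {n N : ℕ} (hn : 0 < n) (hnN : n + 1 ≤ N) {b : ℝ} (hb : b < riemannLower n N) :
    ∀ᶠ k in atTop, b < tailSum f (k + 1) / (k * f k) := by
  have hV : Tendsto (fun c => (∑ q ∈ Ico (n + 1) N, f ((q + 1) * c)) /
      ((n + 1 : ℕ) * f (n * c))) atTop (𝓝 (riemannLower n N)) := by
    refine Tendsto.div_of_div (g := f) (Eventually.of_forall fun c => (hpos c).ne') ?_ ?_
      (by positivity)
    · simp only [sum_div]
      exact tendsto_finsetSum _ fun q _ => hf (q + 1) q.succ_pos
    · simp only [mul_div_assoc]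
      exact (hf n hn).const_mul _
  filter_upwards [(Nat.tendsto_div_const_atTop hn.ne').eventually
    ((hV.eventually (lt_mem_nhds hb)).and (eventually_ge_atTop n))] with k ⟨hVk, hk⟩
  exact hVk.trans_le (div_le_tailSum_succ_div hpos hanti (summable_of_tendsto_div hpos hanti hf)
    hnN (by omega) hn (Nat.mul_div_le k n) (Nat.succ_le_succ_mul_div hn hk))

theorem tendsto_tailSum_succ_div (hpos : ∀ k, 0 < f k) (hanti : Antitone f)
    (hf : ∀ q : ℕ, 0 < q → Tendsto (fun c => f (q * c) / f c) atTop (𝓝 ((q : ℝ) ^ 2)⁻¹)) :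
    Tendsto (fun k : ℕ => tailSum f (k + 1) / (k * f k)) atTop (𝓝 1) := by
  refine tendsto_order.2 ⟨fun b hb => ?_, fun b hb => ?_⟩
  · obtain ⟨n, hn, hn2⟩ := ((eventually_lt_riemannLower hb).and (eventually_ge_atTop 2)).exists
    exact eventually_lt_tailSum_succ_div hpos hanti hf (by omega) (by nlinarith) hn
  · obtain ⟨n, hn, hn1⟩ := ((eventually_riemannUpper_lt hb).and (eventually_ge_atTop 1)).exists
    exact eventually_tailSum_succ_div_lt hpos hanti hf hn1 (by nlinarith) hn

end Karamata

lemma SlowlyVarying.eventually_ne_zero {L : ℝ → ℝ} (hL : SlowlyVarying L) :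
    ∀ᶠ x in atTop, L x ≠ 0 :=
  ((hL 1 one_pos).eventually_ne one_ne_zero).mono fun x hx h0 => hx (by rw [h0, div_zero])

lemma SlowlyVarying.tendsto_div_of_eq_div_sq {L : ℝ → ℝ} (hL : SlowlyVarying L) {f : ℕ → ℝ}
    (hfL : ∀ k : ℕ, 1 ≤ k → f k = L k / (k : ℝ) ^ 2) (q : ℕ) (hq : 0 < q) :
    Tendsto (fun c => f (q * c) / f c) atTop (𝓝 ((q : ℝ) ^ 2)⁻¹) := by
  have hlim := ((hL q (by exact_mod_cast hq)).comp tendsto_natCast_atTop_atTop).const_mul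
    ((q : ℝ) ^ 2)⁻¹
  rw [mul_one] at hlim
  refine hlim.congr' ((eventually_ge_atTop 1).mono fun c hc => ?_)
  have hc' : (c : ℝ) ≠ 0 := by positivity
  have hq' : (q : ℝ) ≠ 0 := by positivity
  simp only [Function.comp_apply]
  rw [hfL c hc, hfL (q * c) (Nat.one_le_iff_ne_zero.2 (by positivity))]
  push_cast
  field_simp

lemma Antitone.pos_of_eventually_ne {f : ℕ → ℝ} (hanti : Antitone f) (h0 : ∀ k, 0 ≤ f k)
    (hne : ∀ᶠ k in atTop, f k ≠ 0) (k : ℕ) : 0 < f k := by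
  obtain ⟨K, hK⟩ := eventually_atTop.1 hne
  exact ((h0 _).lt_of_ne (hK _ (le_max_right k K)).symm).trans_le (hanti (le_max_left k K))

lemma tsum_two_mul_tailSum_sub {μ : ℕ → ℝ} (hμ : Summable μ) (hs : Summable (tailSum μ))
    (k : ℕ) : ∑' m, (2 * tailSum μ (2 * (k + m) + 1) - μ (2 * (k + m) + 1)) =
      tailSum (tailSum μ) (2 * k + 1) := by
  have hs' := summable_nat_add_left hs (2 * k + 1)
  have he : Summable fun m => tailSum μ (2 * k + 1 + 2 * m) :=
    hs'.comp_injective fun a b h => by simpa using h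
  have ho : Summable fun m => tailSum μ (2 * k + 1 + (2 * m + 1)) :=
    hs'.comp_injective fun a b h => by simpa using h
  rw [tailSum, ← tsum_even_add_odd (f := fun i => tailSum μ (2 * k + 1 + i)) he ho,
    ← he.tsum_add ho]
  refine tsum_congr fun m => ?_
  rw [show 2 * k + 1 + 2 * m = 2 * (k + m) + 1 by ring,
    show 2 * k + 1 + (2 * m + 1) = 2 * (k + m) + 1 + 1 by ring,
    tailSum_eq_add_tailSum_succ hμ (2 * (k + m) + 1)]
  ring

/-- With `P((L₁,R₁) = (i,j)) = μ(i+j+1)`, the first sum is `P(R₁ ≥ k)` and the second is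
`P(min(L₁,R₁) ≥ k)`. -/
theorem stmt_13_general (μ : ℕ → ℝ) (L : ℝ → ℝ)
    (hpos : ∀ k, 0 ≤ μ k)
    (hL : SlowlyVarying L)
    (htail : ∀ k : ℕ, 1 ≤ k → tailSum μ k = L k / (k : ℝ) ^ 2) :
    Tendsto (fun k : ℕ =>
        (∑' m : ℕ, tailSum μ ((k + m) + 1)) / (L k / k)) atTop (nhds 1) ∧
    Tendsto (fun k : ℕ =>
        (∑' m : ℕ, (2 * tailSum μ (2 * (k + m) + 1) - μ (2 * (k + m) + 1)))
          / (L k / (2 * k))) atTop (nhds 1) := by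
  have hfne : ∀ᶠ k : ℕ in atTop, tailSum μ k ≠ 0 :=
    ((tendsto_natCast_atTop_atTop.eventually hL.eventually_ne_zero).and
      (eventually_ge_atTop 1)).mono fun k ⟨hk, hk1⟩ => by
        rw [htail k hk1]; exact div_ne_zero hk (by positivity)
  have hμ : Summable μ := summable_of_tailSum_ne_zero hfne.exists.choose_spec
  have hanti := tailSum_anti hμ hpos
  have hfpos := hanti.pos_of_eventually_ne (tailSum_nonneg hpos) hfne
  have hLf : ∀ k : ℕ, 1 ≤ k → L k / k = k * tailSum μ k := fun k hk => by
    have hk0 : (k : ℝ) ≠ 0 := by positivity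
    rw [htail k hk]; field_simp
  have hratio := hL.tendsto_div_of_eq_div_sq htail
  have hK := tendsto_tailSum_succ_div hfpos hanti hratio
  constructor
  · refine hK.congr' ((eventually_ge_atTop 1).mono fun k hk => ?_)
    dsimp only
    rw [hLf k hk, tailSum]
    simp only [add_right_comm k]
  · have h2 := (hK.comp (tendsto_id.const_mul_atTop' two_pos)).mul
      ((hratio 2 two_pos).const_mul 4)
    rw [show (1 : ℝ) * (4 * (((2 : ℕ) : ℝ) ^ 2)⁻¹) = 1 by norm_num] at h2
    refine h2.congr' ((eventually_ge_atTop 1).mono fun k hk => ?_)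
    have hfk := hfpos k
    have hf2k := hfpos (2 * k)
    simp only [Function.comp_apply, id]
    rw [tsum_two_mul_tailSum_sub hμ (summable_of_tendsto_div hfpos hanti hratio),
      show L k / (2 * k) = L k / k / 2 by ring, hLf k hk]
    push_cast
    field_simp
    ring

/-- Let `μ` have mean `1` and tail `μ([k,∞)) = L(k)/k²` with `L` slowly varying, and let
`(L₁,R₁)` have law `P((L₁,R₁)=(i,j)) = μ(i+j+1)`. Then, as `k → ∞`,
`P(R₁ ≥ k) ∼ L(k)/k` and `P(min(L₁,R₁) ≥ k) ∼ L(k)/(2k)`.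
Here `P(R₁ ≥ k) = Σ_{m ≥ k} μ([m+1,∞))` and
`P(min(L₁,R₁) ≥ k) = Σ_{m ≥ k} (2μ([2m+1,∞)) − μ(2m+1))`. -/
theorem stmt_13 (μ : ℕ → ℝ) (L : ℝ → ℝ)
    (hpos : ∀ k, 0 ≤ μ k)
    (hsum : ∑' k, μ k = 1)
    (hmean_summable : Summable (fun k : ℕ => (k : ℝ) * μ k))
    (hmean : ∑' k : ℕ, (k : ℝ) * μ k = 1)
    (hL : SlowlyVarying L)
    (htail : ∀ k : ℕ, 1 ≤ k → tailSum μ k = L k / (k : ℝ) ^ 2) :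
    Tendsto (fun k : ℕ =>
        (∑' m : ℕ, tailSum μ ((k + m) + 1)) / (L k / k)) atTop (nhds 1) ∧
    Tendsto (fun k : ℕ =>
        (∑' m : ℕ, (2 * tailSum μ (2 * (k + m) + 1) - μ (2 * (k + m) + 1)))
          / (L k / (2 * k))) atTop (nhds 1) :=
  stmt_13_general μ L hpos hL htail
end
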